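/- Let B be a 2-(v,k,λ_2;2) design with a G-induced tactical decomposition, matrices [ρ_ij], [κ_ij], point orbits Ψ_1,...,Ψ_m, and let l, r, s be pairwise distinct. Then Σ_{j=1}^n ρ_{lj} κ_{rj} κ_{sj} = σ_{lrs}·λ_2 + φ, where φ is the sum over pairs (R,S) ∈ Ψ_r × Ψ_s with dim⟨P,R,S⟩ = 3 (for a fixed P ∈ Ψ_l) of the number of blocks containing ⟨P,R,S⟩, and φ ≤ (|Ψ_r|·|Ψ_s| − σ_{lrs})·min{λ_2, [v-3 choose k-3]_2}. In particular, σ_{lrs}·λ_2 ≤ Σ_{j=1}^n ρ_{lj} κ_{rj} κ_{sj} ≤ σ_{lrs}·λ_2 + (|Ψ_r|·|Ψ_s| − σ_{lrs})·min{λ_2, [v-3 choose k-3]_2}. -/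

import Mathlib

open scoped Classical

/-- The Gaussian binomial coefficient `[v choose r]_q`. -/
def gaussBinom (q v r : ℕ) : ℕ :=
  (∏ i ∈ Finset.range r, (q ^ (v - i) - 1)) / (∏ i ∈ Finset.range r, (q ^ (i + 1) - 1))

/-- `B` is a `t-(v,k,λ;q)` design. -/
def IsQDesign (F : Type*) [Field F] [Fintype F] (v t k lam : ℕ)
    (B : Finset (Submodule F (Fin v → F))) : Prop :=
  (∀ b ∈ B, Module.finrank F ↥b = k) ∧
  ∀ W : Submodule F (Fin v → F), Module.finrank F ↥W = t →
    (B.filter fun b => W ≤ b).card = lam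

/-- A tactical decomposition of a design `B` over `F`: a partition of the points (the
`1`-dimensional subspaces of `F^v`) into classes `Pc 1, …, Pc m` and of the block set `B`
into classes `Bc 1, …, Bc n`, such that every point of `Pc i` lies in exactly `rho i j`
blocks of `Bc j` and every block of `Bc j` contains exactly `kap i j` points of `Pc i`. -/
structure TacticalDecomp (F : Type*) [Field F] [Fintype F] (v m n : ℕ)
    (B : Finset (Submodule F (Fin v → F))) where
  Pc : Fin m → Set (Submodule F (Fin v → F))
  Bc : Fin n → Finset (Submodule F (Fin v → F))
  rho : Fin m → Fin n → ℕ
  kap : Fin m → Fin n → ℕ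
  Pc_nonempty : ∀ i, (Pc i).Nonempty
  Bc_nonempty : ∀ j, (Bc j).Nonempty
  Pc_sub : ∀ i, Pc i ⊆ {W : Submodule F (Fin v → F) | Module.finrank F ↥W = 1}
  Pc_cover : ∀ W : Submodule F (Fin v → F), Module.finrank F ↥W = 1 → ∃ i, W ∈ Pc i
  Pc_disj : ∀ i i', i ≠ i' → Disjoint (Pc i) (Pc i')
  Bc_cover : ∀ b : Submodule F (Fin v → F), b ∈ B ↔ ∃ j, b ∈ Bc j
  Bc_disj : ∀ j j', j ≠ j' → Disjoint (Bc j) (Bc j')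
  rho_eq : ∀ i j, ∀ P ∈ Pc i, ((Bc j).filter fun b => P ≤ b).card = rho i j
  kap_eq : ∀ i j, ∀ b ∈ Bc j, {Q | Q ∈ Pc i ∧ Q ≤ b}.ncard = kap i j

/-- For `1`-dimensional subspaces `P = ⟨p⟩` and `R = ⟨r⟩` of `F_2^v` with `P ≠ R`, this is
the third point `P+R = ⟨p+r⟩` of the `2`-space `⟨P,R⟩`: the span of the sums of the
nonzero vectors of `P` and `R`. -/
def thirdPoint {v : ℕ} (P R : Submodule (ZMod 2) (Fin v → ZMod 2)) :
    Submodule (ZMod 2) (Fin v → ZMod 2) :=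
  Submodule.span (ZMod 2) {x | ∃ p ∈ P, ∃ r ∈ R, p ≠ 0 ∧ r ≠ 0 ∧ x = p + r}

/-!
Sorting the triples (b, R, S) with `P, R, S ≤ b` by the block class of `b` gives
`Σ_j ρ_lj κ_rj κ_sj = Σ_{R ∈ Ψ_r, S ∈ Ψ_s} #{blocks through P, R, S}`. Over `F_2` three distinct
points either are the three points `P, R, P+R` of a line or span a plane. The pairs of the first
kind are counted by `σ_lrs`, and each contributes `λ_2`, the number of blocks through the line
`⟨P, R⟩`. The pairs of the second kind make up `φ`; each of their terms is at most `λ_2` and at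
most the number of `k`-subspaces through a fixed plane, and these correspond to `(k-3)`-subspaces
of the quotient by the plane, of which there are at most `[v-3 choose k-3]_2`.
-/

open Module Finset

lemma prod_range_pow_sub_pow (q N d : ℕ) (h : d ≤ N) :
    ∏ i ∈ range d, (q ^ N - q ^ i) = (∏ i ∈ range d, q ^ i) * ∏ i ∈ range d, (q ^ (N - i) - 1) := by
  rw [← prod_mul_distrib]
  refine prod_congr rfl fun i hi => ?_
  rw [Nat.mul_sub, mul_one, ← pow_add, Nat.add_sub_cancel' (by grind)]

section SubspaceCount

variable {K V : Type*} [Field K] [Fintype K] [AddCommGroup V] [Module K V] [Finite V]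

local notation "q" => Fintype.card K

lemma card_linearIndependent_eq_prod {d : ℕ} (hd : d ≤ finrank K V) :
    Nat.card {s : Fin d → V // LinearIndependent K s} =
      (∏ i ∈ range d, q ^ i) * ∏ i ∈ range d, (q ^ (finrank K V - i) - 1) := by
  rw [card_linearIndependent hd, Fin.prod_univ_eq_prod_range (fun i => q ^ finrank K V - q ^ i),
    prod_range_pow_sub_pow _ _ _ hd]

/-- An independent `d`-tuple spans a unique `d`-subspace, and every `d`-subspace carries
`∏ (q^d - q^i)` of them. -/
lemma card_finrank_eq_mul_le (d : ℕ) :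
    Nat.card {U : Submodule K V // finrank K U = d} * ∏ i : Fin d, (q ^ d - q ^ (i : ℕ)) ≤
      Nat.card {s : Fin d → V // LinearIndependent K s} := by
  have : Fintype {U : Submodule K V // finrank K U = d} := Fintype.ofFinite _
  have hspan (U : {U : Submodule K V // finrank K U = d}) (s : Fin d → U.1)
      (hs : LinearIndependent K s) : Submodule.span K (Set.range (U.1.subtype ∘ s)) = U.1 := by
    have htop : Submodule.span K (Set.range s) = ⊤ :=
      hs.span_eq_top_of_card_eq_finrank' (by rw [Fintype.card_fin, U.2])
    rw [Set.range_comp, Submodule.span_image, htop, Submodule.map_top, Submodule.range_subtype]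
  calc Nat.card {U : Submodule K V // finrank K U = d} * ∏ i : Fin d, (q ^ d - q ^ (i : ℕ))
      = ∑ U : {U : Submodule K V // finrank K U = d},
          Nat.card {s : Fin d → U.1 // LinearIndependent K s} := by
        rw [sum_congr rfl fun U _ => by rw [card_linearIndependent U.2.ge, U.2], sum_const,
          card_univ, smul_eq_mul, Nat.card_eq_fintype_card]
    _ = Nat.card (Σ U : {U : Submodule K V // finrank K U = d},
          {s : Fin d → U.1 // LinearIndependent K s}) := Nat.card_sigma.symm
    _ ≤ _ := by
      refine Nat.card_le_card_of_injective
        (fun x => ⟨x.1.1.subtype ∘ x.2.1, x.2.2.map' _ x.1.1.ker_subtype⟩) ?_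
      rintro ⟨U, s, hs⟩ ⟨U', s', hs'⟩ h
      have h' : U.1.subtype ∘ s = U'.1.subtype ∘ s' := congrArg Subtype.val h
      obtain rfl : U = U' := Subtype.ext (by rw [← hspan U s hs, ← hspan U' s' hs', h'])
      obtain rfl : s = s' := funext fun i => Subtype.ext (congrFun h' i)
      rfl

lemma card_finrank_eq_le_gaussBinom (d : ℕ) :
    Nat.card {U : Submodule K V // finrank K U = d} ≤ gaussBinom q (finrank K V) d := by
  by_cases hd : d ≤ finrank K V
  · have key := card_finrank_eq_mul_le (K := K) (V := V) d
    have hreflect : ∏ i ∈ range d, (q ^ (d - i) - 1) = ∏ i ∈ range d, (q ^ (i + 1) - 1) := by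
      rw [← prod_range_reflect (fun i => q ^ (i + 1) - 1)]
      exact prod_congr rfl fun i hi => by rw [mem_range] at hi; congr 2; omega
    rw [card_linearIndependent_eq_prod hd, Fin.prod_univ_eq_prod_range (fun i => q ^ d - q ^ i),
      prod_range_pow_sub_pow _ _ _ le_rfl, hreflect, mul_left_comm] at key
    have hpow : 0 < ∏ i ∈ range d, q ^ i := prod_pos fun i _ => pow_pos Fintype.card_pos i
    have hden : 0 < ∏ i ∈ range d, (q ^ (i + 1) - 1) :=
      prod_pos fun i _ => Nat.sub_pos_of_lt (Nat.one_lt_pow i.succ_ne_zero Fintype.one_lt_card)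
    exact (Nat.le_div_iff_mul_le hden).mpr (Nat.le_of_mul_le_mul_left key hpow)
  · have : IsEmpty {U : Submodule K V // finrank K U = d} :=
      ⟨fun U => hd (U.2 ▸ Submodule.finrank_le U.1)⟩
    simp

end SubspaceCount

lemma Submodule.finrank_map_mkQ_add_finrank {K V : Type*} [Field K] [AddCommGroup V] [Module K V]
    [FiniteDimensional K V] {W b : Submodule K V} (hWb : W ≤ b) :
    finrank K (b.map W.mkQ) + finrank K W = finrank K b := by
  have h := (W.mkQ.domRestrict b).finrank_range_add_finrank_ker
  rwa [LinearMap.range_domRestrict, LinearMap.ker_domRestrict, Submodule.ker_mkQ,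
    (Submodule.comapSubtypeEquivOfLe hWb).finrank_eq] at h

lemma card_filter_le_le_gaussBinom {K V : Type*} [Field K] [Fintype K] [AddCommGroup V]
    [Module K V] [Finite V] (Bs : Finset (Submodule K V)) {k : ℕ}
    (hk : ∀ b ∈ Bs, finrank K b = k) (W : Submodule K V) :
    #(Bs.filter (W ≤ ·)) ≤
      gaussBinom (Fintype.card K) (finrank K V - finrank K W) (k - finrank K W) := by
  have : Finite (V ⧸ W) := Finite.of_surjective _ W.mkQ_surjective
  have hrank (b : Bs.filter (W ≤ ·)) : finrank K (b.1.map W.mkQ) = k - finrank K W := by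
    obtain ⟨hb, hWb⟩ := mem_filter.mp b.2
    have := Submodule.finrank_map_mkQ_add_finrank hWb
    rw [hk _ hb] at this
    omega
  calc #(Bs.filter (W ≤ ·))
      = Nat.card (Bs.filter (W ≤ ·)) := (Nat.card_eq_finsetCard _).symm
    _ ≤ Nat.card {U : Submodule K (V ⧸ W) // finrank K U = k - finrank K W} := by
      refine Nat.card_le_card_of_injective (fun b => ⟨b.1.map W.mkQ, hrank b⟩) ?_
      rintro ⟨b, hb⟩ ⟨b', hb'⟩ h
      have hmap : b.map W.mkQ = b'.map W.mkQ := congrArg Subtype.val h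
      have hcomap := congrArg (Submodule.comap W.mkQ) hmap
      rw [Submodule.comap_map_mkQ, Submodule.comap_map_mkQ,
        sup_eq_right.mpr (mem_filter.mp hb).2, sup_eq_right.mpr (mem_filter.mp hb').2] at hcomap
      exact Subtype.ext hcomap
    _ ≤ _ := by
      rw [← W.finrank_quotient]
      exact card_finrank_eq_le_gaussBinom _

lemma Submodule.exists_eq_span_singleton_of_finrank_eq_one {K V : Type*} [Field K]
    [AddCommGroup V] [Module K V] {P : Submodule K V} (hP : finrank K P = 1) :
    ∃ p ≠ 0, P = K ∙ p :=
  ⟨_, Projectivization.rep_nonzero (.mk'' P hP), by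
    rw [← Projectivization.submodule_eq, Projectivization.submodule_mk'']⟩

section Binary

variable {V : Type*} [AddCommGroup V] [Module (ZMod 2) V]

lemma mem_span_singleton_zmod_two {x p : V} : x ∈ ZMod 2 ∙ p ↔ x = 0 ∨ x = p := by
  rw [Submodule.mem_span_singleton]
  constructor
  · rintro ⟨c, rfl⟩
    obtain rfl | rfl : c = 0 ∨ c = 1 := by fin_cases c; exacts [.inl rfl, .inr rfl]
    exacts [.inl (zero_smul _ p), .inr (one_smul _ p)]
  · rintro (rfl | rfl)
    exacts [⟨0, zero_smul _ _⟩, ⟨1, one_smul _ _⟩]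

lemma span_singleton_eq_span_singleton_zmod_two {x y : V} (hx : x ≠ 0) :
    (ZMod 2 ∙ x) = (ZMod 2 ∙ y) ↔ x = y := by
  refine ⟨fun h => ?_, fun h => h ▸ rfl⟩
  have hxy : x ∈ ZMod 2 ∙ y := h ▸ Submodule.mem_span_singleton_self x
  exact (mem_span_singleton_zmod_two.mp hxy).resolve_left hx

lemma mem_span_singleton_sup_zmod_two {x p r : V} (hxp : x ≠ p) (hxr : x ≠ r) (hx : x ≠ 0) :
    x ∈ (ZMod 2 ∙ p) ⊔ (ZMod 2 ∙ r) ↔ x = p + r := by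
  refine ⟨fun h => ?_, fun h => h ▸ Submodule.add_mem_sup
    (Submodule.mem_span_singleton_self p) (Submodule.mem_span_singleton_self r)⟩
  obtain ⟨y, hy, z, hz, rfl⟩ := Submodule.mem_sup.mp h
  rcases mem_span_singleton_zmod_two.mp hy with rfl | rfl <;>
    rcases mem_span_singleton_zmod_two.mp hz with rfl | rfl <;> simp_all

end Binary

section ThirdPoint

variable {v : ℕ}

lemma thirdPoint_le_sup (P R : Submodule (ZMod 2) (Fin v → ZMod 2)) :
    thirdPoint P R ≤ P ⊔ R :=
  Submodule.span_le.mpr fun _ ⟨_, hp, _, hr, _, _, hx⟩ => hx ▸ Submodule.add_mem_sup hp hr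

lemma thirdPoint_span_singleton {p r : Fin v → ZMod 2} (hp : p ≠ 0) (hr : r ≠ 0) :
    thirdPoint (ZMod 2 ∙ p) (ZMod 2 ∙ r) = ZMod 2 ∙ (p + r) := by
  unfold thirdPoint
  congr 1
  refine Set.ext fun x => ⟨?_, fun hx => ⟨p, Submodule.mem_span_singleton_self p,
    r, Submodule.mem_span_singleton_self r, hp, hr, hx⟩⟩
  rintro ⟨a, ha, b, hb, ha0, hb0, rfl⟩
  rw [Set.mem_singleton_iff, (mem_span_singleton_zmod_two.mp ha).resolve_left ha0,
    (mem_span_singleton_zmod_two.mp hb).resolve_left hb0]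

lemma finrank_sup_sup_eq_three_iff {P R S : Submodule (ZMod 2) (Fin v → ZMod 2)}
    (hP : finrank (ZMod 2) P = 1) (hR : finrank (ZMod 2) R = 1) (hS : finrank (ZMod 2) S = 1)
    (hPR : P ≠ R) (hPS : P ≠ S) (hRS : R ≠ S) :
    finrank (ZMod 2) ↥(P ⊔ R ⊔ S) = 3 ↔ S ≠ thirdPoint P R := by
  obtain ⟨p, hp, rfl⟩ := Submodule.exists_eq_span_singleton_of_finrank_eq_one hP
  obtain ⟨r, hr, rfl⟩ := Submodule.exists_eq_span_singleton_of_finrank_eq_one hR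
  obtain ⟨s, hs, rfl⟩ := Submodule.exists_eq_span_singleton_of_finrank_eq_one hS
  rw [Ne, span_singleton_eq_span_singleton_zmod_two hp] at hPR hPS
  rw [Ne, span_singleton_eq_span_singleton_zmod_two hr] at hRS
  have hrp : r ∉ ZMod 2 ∙ p := by simp [mem_span_singleton_zmod_two, hr, Ne.symm hPR]
  have hpr : finrank (ZMod 2) ↥((ZMod 2 ∙ p) ⊔ (ZMod 2 ∙ r)) = 2 := by
    rw [Submodule.finrank_sup_span_singleton hrp, finrank_span_singleton hp]
  rw [thirdPoint_span_singleton hp hr, Ne, span_singleton_eq_span_singleton_zmod_two hs,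
    ← mem_span_singleton_sup_zmod_two (Ne.symm hPS) (Ne.symm hRS) hs]
  by_cases hsup : s ∈ (ZMod 2 ∙ p) ⊔ (ZMod 2 ∙ r)
  · rw [sup_eq_left.mpr ((Submodule.span_singleton_le_iff_mem _ _).mpr hsup), hpr]
    simp [hsup]
  · rw [Submodule.finrank_sup_span_singleton hsup, hpr]
    simp [hsup]

end ThirdPoint

lemma sum_card_filter_mul_card_filter {α β : Type*} (X : Finset α) (Y Z : Finset β)
    (rel : β → α → Prop) :
    ∑ b ∈ X, #(Y.filter (rel · b)) * #(Z.filter (rel · b)) =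
      ∑ y ∈ Y, ∑ z ∈ Z, #(X.filter fun b => rel y b ∧ rel z b) := by
  simp only [card_filter, sum_mul_sum, ite_zero_mul_ite_zero, mul_one]
  rw [sum_comm]
  exact sum_congr rfl fun y _ => sum_comm

namespace TacticalDecomp

variable {F : Type*} [Field F] [Fintype F] {v m n : ℕ} {B : Finset (Submodule F (Fin v → F))}
  (T : TacticalDecomp F v m n B)

lemma ne_of_mem_Pc {i j : Fin m} (hij : i ≠ j) {X Y : Submodule F (Fin v → F)}
    (hX : X ∈ T.Pc i) (hY : Y ∈ T.Pc j) : X ≠ Y :=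
  fun h => Set.disjoint_left.mp (T.Pc_disj i j hij) hX (h ▸ hY)

lemma biUnion_Bc : univ.biUnion T.Bc = B :=
  Finset.ext fun b => by simp [T.Bc_cover]

lemma card_filter_Pc_le_eq_kap {j : Fin n} {b : Submodule F (Fin v → F)} (hb : b ∈ T.Bc j)
    (i : Fin m) :
    #((T.Pc i).toFinite.toFinset.filter (· ≤ b)) = T.kap i j := by
  rw [← T.kap_eq i j b hb, ← Set.ncard_coe_finset]
  congr 1
  ext Q
  simp

lemma sum_rho_mul_kap_mul_kap {l : Fin m} {P : Submodule F (Fin v → F)} (hP : P ∈ T.Pc l)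
    (r s : Fin m) :
    ∑ j, T.rho l j * T.kap r j * T.kap s j =
      ∑ R ∈ (T.Pc r).toFinite.toFinset, ∑ S ∈ (T.Pc s).toFinite.toFinset,
        #(B.filter fun b => P ≤ b ∧ R ≤ b ∧ S ≤ b) := by
  set Fr := (T.Pc r).toFinite.toFinset
  set Fs := (T.Pc s).toFinite.toFinset
  calc ∑ j, T.rho l j * T.kap r j * T.kap s j
      = ∑ j, ∑ b ∈ (T.Bc j).filter (P ≤ ·), #(Fr.filter (· ≤ b)) * #(Fs.filter (· ≤ b)) := by
        refine sum_congr rfl fun j _ => ?_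
        rw [sum_congr rfl fun b hb => by
            rw [T.card_filter_Pc_le_eq_kap (mem_filter.mp hb).1,
              T.card_filter_Pc_le_eq_kap (mem_filter.mp hb).1],
          sum_const, T.rho_eq l j P hP, smul_eq_mul, mul_assoc]
    _ = ∑ b ∈ B.filter (P ≤ ·), #(Fr.filter (· ≤ b)) * #(Fs.filter (· ≤ b)) := by
        conv_rhs => rw [← T.biUnion_Bc]
        rw [filter_biUnion, sum_biUnion fun j _ j' _ hjj' =>
          disjoint_filter_filter (T.Bc_disj j j' hjj')]
    _ = _ := by
        rw [sum_card_filter_mul_card_filter]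
        simp only [filter_filter]

end TacticalDecomp

section CollinearSplit

variable {α β : Type*} {A : Finset α} {C : Finset β} {t : α → β} {p : α → β → Prop}
  [∀ a c, Decidable (p a c)]

lemma sum_sum_ite_eq_sum_filter (hp : ∀ a ∈ A, ∀ c ∈ C, p a c ↔ c ≠ t a) (g : α → β → ℕ) :
    ∑ a ∈ A, ∑ c ∈ C, (if p a c then 0 else g a c) = ∑ a ∈ A.filter (t · ∈ C), g a (t a) := by
  rw [sum_filter]
  refine sum_congr rfl fun a ha => ?_
  rw [← sum_ite_eq' C (t a) (g a)]
  refine sum_congr rfl fun c hc => ?_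
  simp only [hp a ha c hc]
  by_cases h : c = t a <;> simp [h]

lemma sum_sum_eq_card_filter_mul_add (hp : ∀ a ∈ A, ∀ c ∈ C, p a c ↔ c ≠ t a)
    {N : α → β → ℕ} {lam : ℕ} (hN : ∀ a ∈ A, t a ∈ C → N a (t a) = lam) :
    ∑ a ∈ A, ∑ c ∈ C, N a c =
      #(A.filter (t · ∈ C)) * lam + ∑ a ∈ A, ∑ c ∈ C, if p a c then N a c else 0 := by
  have hsplit : ∑ a ∈ A, ∑ c ∈ C, N a c = ∑ a ∈ A, ∑ c ∈ C, (if p a c then 0 else N a c) +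
      ∑ a ∈ A, ∑ c ∈ C, if p a c then N a c else 0 := by
    rw [← sum_add_distrib]
    refine sum_congr rfl fun a _ => ?_
    rw [← sum_add_distrib]
    exact sum_congr rfl fun c _ => by split_ifs <;> simp
  rw [hsplit, sum_sum_ite_eq_sum_filter hp, sum_congr rfl fun a ha => hN a (mem_filter.mp ha).1
    (mem_filter.mp ha).2, sum_const, smul_eq_mul]

lemma sum_sum_ite_le (hp : ∀ a ∈ A, ∀ c ∈ C, p a c ↔ c ≠ t a) {N : α → β → ℕ} {M : ℕ}
    (hN : ∀ a ∈ A, ∀ c ∈ C, p a c → N a c ≤ M) :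
    ∑ a ∈ A, ∑ c ∈ C, (if p a c then N a c else 0) ≤ (#A * #C - #(A.filter (t · ∈ C))) * M := by
  have hcount := sum_sum_eq_card_filter_mul_add hp (N := fun _ _ => 1) (lam := 1)
    fun _ _ _ => rfl
  simp only [sum_const, smul_eq_mul, mul_one] at hcount
  calc ∑ a ∈ A, ∑ c ∈ C, (if p a c then N a c else 0)
      ≤ ∑ a ∈ A, ∑ c ∈ C, (if p a c then 1 else 0) * M := by
        gcongr with a ha c hc
        split_ifs with h
        · simpa using hN a ha c hc h
        · simp
    _ = (#A * #C - #(A.filter (t · ∈ C))) * M := by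
        simp_rw [← sum_mul]
        congr 1
        omega

end CollinearSplit

lemma Finset.filter_le_and_le_and_le {α : Type*} [SemilatticeSup α] (B : Finset α)
    (P R S : α) :
    B.filter (fun b => P ≤ b ∧ R ≤ b ∧ S ≤ b) = B.filter (P ⊔ R ⊔ S ≤ ·) := by
  simp only [sup_le_iff, and_assoc]

lemma finrank_sup_eq_two {F V : Type*} [Field F] [AddCommGroup V] [Module F V]
    [FiniteDimensional F V] {P R : Submodule F V} (hP : finrank F P = 1)
    (hR : finrank F R = 1) (hPR : P ≠ R) : finrank F ↥(P ⊔ R) = 2 := by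
  obtain ⟨x, hx, rfl⟩ := Submodule.exists_eq_span_singleton_of_finrank_eq_one hR
  have hxP : x ∉ P := fun h => hPR <| (Submodule.eq_of_le_of_finrank_eq
    ((Submodule.span_singleton_le_iff_mem x P).mpr h) (hR.trans hP.symm)).symm
  rw [Submodule.finrank_sup_span_singleton hxP, hP]

lemma IsQDesign.card_filter_triple_le_min {F : Type*} [Field F] [Fintype F] {v k lam : ℕ}
    {B : Finset (Submodule F (Fin v → F))} (hB : IsQDesign F v 2 k lam B)
    {P R S : Submodule F (Fin v → F)} (hPR : finrank F ↥(P ⊔ R) = 2)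
    (hPRS : finrank F ↥(P ⊔ R ⊔ S) = 3) :
    #(B.filter fun b => P ≤ b ∧ R ≤ b ∧ S ≤ b) ≤
      min lam (gaussBinom (Fintype.card F) (v - 3) (k - 3)) := by
  rw [filter_le_and_le_and_le]
  refine le_min ?_ ?_
  · exact hB.2 _ hPR ▸ card_le_card (monotone_filter_right _ fun b _ => le_sup_left.trans)
  · simpa [hPRS] using card_filter_le_le_gaussBinom B hB.1 (P ⊔ R ⊔ S)

lemma IsQDesign.card_filter_triple_thirdPoint {v k lam : ℕ}
    {B : Finset (Submodule (ZMod 2) (Fin v → ZMod 2))} (hB : IsQDesign (ZMod 2) v 2 k lam B)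
    {P R : Submodule (ZMod 2) (Fin v → ZMod 2)}
    (hPR : finrank (ZMod 2) ↥(P ⊔ R) = 2) :
    #(B.filter fun b => P ≤ b ∧ R ≤ b ∧ thirdPoint P R ≤ b) = lam := by
  rw [filter_le_and_le_and_le, sup_eq_left.mpr (thirdPoint_le_sup P R)]
  exact hB.2 _ hPR

theorem tacticalDecomp_triple_sum_distinct_general (v k lam2 m n : ℕ)
    (B : Finset (Submodule (ZMod 2) (Fin v → ZMod 2)))
    (hB : IsQDesign (ZMod 2) v 2 k lam2 B)
    (T : TacticalDecomp (ZMod 2) v m n B)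
    (l r s : Fin m) (hlr : l ≠ r) (hls : l ≠ s) (hrs : r ≠ s)
    (P : Submodule (ZMod 2) (Fin v → ZMod 2)) (hP : P ∈ T.Pc l) :
    let σ := {R | R ∈ T.Pc r ∧ R ≠ P ∧ thirdPoint P R ∈ T.Pc s}.ncard
    let φ := ∑ᶠ R ∈ T.Pc r, ∑ᶠ S ∈ T.Pc s,
      if Module.finrank (ZMod 2) ↥(P ⊔ R ⊔ S) = 3 then
        (B.filter fun b => P ≤ b ∧ R ≤ b ∧ S ≤ b).card else 0
    (∑ j, T.rho l j * T.kap r j * T.kap s j) = σ * lam2 + φ ∧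
    φ ≤ ((T.Pc r).ncard * (T.Pc s).ncard - σ) * min lam2 (gaussBinom 2 (v - 3) (k - 3)) ∧
    σ * lam2 ≤ (∑ j, T.rho l j * T.kap r j * T.kap s j) ∧
    (∑ j, T.rho l j * T.kap r j * T.kap s j) ≤
      σ * lam2 +
        ((T.Pc r).ncard * (T.Pc s).ncard - σ) *
          min lam2 (gaussBinom 2 (v - 3) (k - 3)) := by
  intro σ φ
  set Fr := (T.Pc r).toFinite.toFinset
  set Fs := (T.Pc s).toFinite.toFinset
  have hPR (R) (hR : R ∈ Fr) : finrank (ZMod 2) ↥(P ⊔ R) = 2 := by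
    rw [Set.Finite.mem_toFinset] at hR
    exact finrank_sup_eq_two (T.Pc_sub l hP) (T.Pc_sub r hR) (T.ne_of_mem_Pc hlr hP hR)
  have hline : ∀ R ∈ Fr, ∀ S ∈ Fs, finrank (ZMod 2) ↥(P ⊔ R ⊔ S) = 3 ↔ S ≠ thirdPoint P R := by
    intro R hR S hS
    rw [Set.Finite.mem_toFinset] at hR hS
    exact finrank_sup_sup_eq_three_iff (T.Pc_sub l hP) (T.Pc_sub r hR) (T.Pc_sub s hS)
      (T.ne_of_mem_Pc hlr hP hR) (T.ne_of_mem_Pc hls hP hS) (T.ne_of_mem_Pc hrs hR hS)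
  have hσ : σ = #(Fr.filter (thirdPoint P · ∈ Fs)) := by
    rw [show σ = _ from Set.ncard_eq_toFinset_card _ (Set.toFinite _)]
    congr 1
    ext R
    simp only [Set.Finite.mem_toFinset, mem_filter, Set.mem_ofPred_eq, Fr, Fs]
    exact ⟨fun ⟨hR, _, hRs⟩ => ⟨hR, hRs⟩,
      fun ⟨hR, hRs⟩ => ⟨hR, (T.ne_of_mem_Pc hlr hP hR).symm, hRs⟩⟩
  have hφ : φ = ∑ R ∈ Fr, ∑ S ∈ Fs, if finrank (ZMod 2) ↥(P ⊔ R ⊔ S) = 3 then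
      #(B.filter fun b => P ≤ b ∧ R ≤ b ∧ S ≤ b) else 0 := by
    simp only [φ, finsum_mem_eq_finite_toFinset_sum _ (Set.toFinite _)]
    rfl
  have hsum : ∑ j, T.rho l j * T.kap r j * T.kap s j = σ * lam2 + φ := by
    rw [T.sum_rho_mul_kap_mul_kap hP, hσ, hφ]
    exact sum_sum_eq_card_filter_mul_add hline
      (N := fun R S => #(B.filter fun b => P ≤ b ∧ R ≤ b ∧ S ≤ b))
      fun R hR _ => hB.card_filter_triple_thirdPoint (hPR R hR)
  have hφle :
      φ ≤ ((T.Pc r).ncard * (T.Pc s).ncard - σ) * min lam2 (gaussBinom 2 (v - 3) (k - 3)) := by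
    rw [hσ, hφ, Set.ncard_eq_toFinset_card _ (Set.toFinite _),
      Set.ncard_eq_toFinset_card _ (Set.toFinite (T.Pc s))]
    exact sum_sum_ite_le hline fun R hR S _ h3 => by
      simpa only [ZMod.card] using hB.card_filter_triple_le_min (hPR R hR) h3
  exact ⟨hsum, hφle, hsum ▸ Nat.le_add_right _ _, hsum ▸ Nat.add_le_add_left hφle _⟩

/-- Theorem 5, case `l ≠ r ≠ s ≠ l`: for a `G`-induced tactical decomposition of a
`2-(v,k,λ₂;2)` design with pairwise distinct indices `l, r, s` and a fixed `P ∈ Ψ_l`,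
`Σ_j ρ_{lj} κ_{rj} κ_{sj} = σ_{lrs}·λ₂ + φ` where `φ` is the sum over pairs
`(R,S) ∈ Ψ_r × Ψ_s` with `dim⟨P,R,S⟩ = 3` of the number of blocks containing `⟨P,R,S⟩`,
and `φ ≤ (|Ψ_r|·|Ψ_s| − σ_{lrs})·min{λ₂, [v-3 choose k-3]_2}`; in particular the stated
lower and upper bounds on `Σ_j ρ_{lj} κ_{rj} κ_{sj}` hold. -/
theorem tacticalDecomp_triple_sum_distinct (v k lam2 m n : ℕ)
    (B : Finset (Submodule (ZMod 2) (Fin v → ZMod 2)))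
    (hB : IsQDesign (ZMod 2) v 2 k lam2 B)
    (T : TacticalDecomp (ZMod 2) v m n B)
    (G : Subgroup ((Fin v → ZMod 2) ≃ₗ[ZMod 2] (Fin v → ZMod 2)))
    (hGB : ∀ g ∈ G, B.image (fun b => Submodule.map g.toLinearMap b) = B)
    (hGPc : ∀ i, ∀ X ∈ T.Pc i,
      T.Pc i = {Y | ∃ g ∈ G, Submodule.map g.toLinearMap X = Y})
    (hGBc : ∀ j, ∀ b ∈ T.Bc j,
      (T.Bc j : Set (Submodule (ZMod 2) (Fin v → ZMod 2))) =
        {c | ∃ g ∈ G, Submodule.map g.toLinearMap b = c})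
    (l r s : Fin m) (hlr : l ≠ r) (hls : l ≠ s) (hrs : r ≠ s)
    (P : Submodule (ZMod 2) (Fin v → ZMod 2)) (hP : P ∈ T.Pc l) :
    let σ := {R | R ∈ T.Pc r ∧ R ≠ P ∧ thirdPoint P R ∈ T.Pc s}.ncard
    let φ := ∑ᶠ R ∈ T.Pc r, ∑ᶠ S ∈ T.Pc s,
      if Module.finrank (ZMod 2) ↥(P ⊔ R ⊔ S) = 3 then
        (B.filter fun b => P ≤ b ∧ R ≤ b ∧ S ≤ b).card else 0
    (∑ j, T.rho l j * T.kap r j * T.kap s j) = σ * lam2 + φ ∧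
    φ ≤ ((T.Pc r).ncard * (T.Pc s).ncard - σ) * min lam2 (gaussBinom 2 (v - 3) (k - 3)) ∧
    σ * lam2 ≤ (∑ j, T.rho l j * T.kap r j * T.kap s j) ∧
    (∑ j, T.rho l j * T.kap r j * T.kap s j) ≤
      σ * lam2 +
        ((T.Pc r).ncard * (T.Pc s).ncard - σ) *
          min lam2 (gaussBinom 2 (v - 3) (k - 3)) :=
  tacticalDecomp_triple_sum_distinct_general v k lam2 m n B hB T l r s hlr hls hrs P hP
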